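/- (Greaves–Koolen–Park) Let m be a positive real number and let G be a finite simple graph with smallest adjacency eigenvalue -m that contains H(a, t) as an induced subgraph, where H(a, t) is the graph on a + t + 1 vertices consisting of a clique K_{a+t} together with one additional vertex adjacent to exactly a vertices of this clique. Then (a - m(m-1))·(t - (m-1)²) ≤ (m(m-1))². -/

import Mathlib

open scoped Classical

/-- The adjacency matrix of a simple graph, over `ℝ`. -/
noncomputable def adjMat {V : Type*} [Fintype V] (G : SimpleGraph V) : Matrix V V ℝ :=
  Matrix.of fun i j => if G.Adj i j then (1 : ℝ) else 0

/-- The smallest (real) eigenvalue of a matrix. -/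
noncomputable def matMinEig {V : Type*} [Fintype V] (A : Matrix V V ℝ) : ℝ :=
  sInf {μ : ℝ | ∃ v : V → ℝ, v ≠ 0 ∧ A.mulVec v = μ • v}

/-- The smallest eigenvalue of a graph. -/
noncomputable def minEig {V : Type*} [Fintype V] (G : SimpleGraph V) : ℝ :=
  matMinEig (adjMat G)

/-- The degree (valency) of a vertex. -/
noncomputable def deg {V : Type*} [Fintype V] (G : SimpleGraph V) (v : V) : ℕ :=
  (G.neighborSet v).ncard
/-- The graph `H(a,t)` on `a + t + 1` vertices: a clique on the first `a + t` vertices,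
together with a last vertex adjacent to exactly the first `a` vertices of the clique. -/
def Hgraph (a t : ℕ) : SimpleGraph (Fin (a + t + 1)) :=
  SimpleGraph.fromRel
    (fun x y => (x.val < a + t ∧ y.val < a + t) ∨ (x.val = a + t ∧ y.val < a))

/-!
Write `A` for the adjacency matrix of `G`. Since `-m` is its smallest eigenvalue, `A + m I` is
positive semidefinite, and so is every principal submatrix: the smallest eigenvalue can only go
up on an induced subgraph. For `H(a,t)` we test the form `x ↦ xᵀ (A_H + m I) x` on vectors that
are constant, with values `α, β, γ`, on the `a` neighbours of the extra vertex, on the other `t`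
clique vertices and on the extra vertex. This is a positive semidefinite ternary form whose
determinant is `a t D` with `D = (m(m-1))² - (a - m(m-1))(t - (m-1)²)`, and evaluating it at a
column of its adjugate shows `D ≥ 0`. When `a = 0` or `t = 0` that determinant vanishes, and
`D ≥ 0` follows instead from `m ≥ 1`: a graph whose smallest eigenvalue is negative has an edge,
and an edge already forces an eigenvalue `≤ -1`.
-/

open Matrix

section Spectrum

variable {V : Type*} [Fintype V]

theorem Matrix.exists_mulVec_eq_smul_iff_mem_spectrum (A : Matrix V V ℝ) (μ : ℝ) :
    (∃ v : V → ℝ, v ≠ 0 ∧ A *ᵥ v = μ • v) ↔ μ ∈ spectrum ℝ A := by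
  rw [← spectrum_toLin', ← Module.End.hasEigenvalue_iff_mem_spectrum]
  constructor
  · rintro ⟨v, hv, hAv⟩
    exact Module.End.hasEigenvalue_of_hasEigenvector ⟨Module.End.mem_eigenspace_iff.mpr hAv, hv⟩
  · intro h
    obtain ⟨v, hv, hv0⟩ := h.exists_hasEigenvector
    exact ⟨v, hv0, Module.End.mem_eigenspace_iff.mp hv⟩

theorem matMinEig_eq_sInf_spectrum (A : Matrix V V ℝ) : matMinEig A = sInf (spectrum ℝ A) := by
  simp only [matMinEig, exists_mulVec_eq_smul_iff_mem_spectrum, Set.ofPred_mem_eq]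

theorem matMinEig_le_of_mem_spectrum (A : Matrix V V ℝ) {μ : ℝ} (hμ : μ ∈ spectrum ℝ A) :
    matMinEig A ≤ μ :=
  matMinEig_eq_sInf_spectrum A ▸ csInf_le A.finite_spectrum.bddBelow hμ

theorem matMinEig_zero [Nonempty V] : matMinEig (0 : Matrix V V ℝ) = 0 := by
  rw [matMinEig_eq_sInf_spectrum, spectrum.zero_eq, csInf_singleton]

namespace Matrix.IsHermitian

variable {A : Matrix V V ℝ}

theorem matMinEig_mem_spectrum [Nonempty V] (hA : A.IsHermitian) :
    matMinEig A ∈ spectrum ℝ A := by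
  rw [matMinEig_eq_sInf_spectrum]
  refine Set.Nonempty.csInf_mem ?_ A.finite_spectrum
  rw [hA.spectrum_real_eq_range_eigenvalues]
  exact Set.range_nonempty _

theorem matMinEig_mul_dotProduct_self_le (hA : A.IsHermitian) (v : V → ℝ) :
    matMinEig A * (v ⬝ᵥ v) ≤ v ⬝ᵥ A *ᵥ v := by
  have hpsd : (A - algebraMap ℝ _ (matMinEig A)).PosSemidef := by
    refine posSemidef_iff_isHermitian_and_spectrum_nonneg.mpr ⟨?_, ?_⟩
    · exact hA.sub (by rw [algebraMap_eq_diagonal]; exact isHermitian_diagonal _)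
    · rw [← spectrum.sub_singleton_eq]
      rintro _ ⟨μ, hμ, _, rfl, rfl⟩
      exact sub_nonneg.mpr (matMinEig_le_of_mem_spectrum A hμ)
  have := hpsd.dotProduct_mulVec_nonneg v
  rw [Algebra.algebraMap_eq_smul_one, sub_mulVec, smul_mulVec, one_mulVec, dotProduct_sub,
    dotProduct_smul, smul_eq_mul] at this
  simpa [sub_nonneg] using this

end Matrix.IsHermitian

end Spectrum

section Interlacing

variable {V W R : Type*} [Fintype V] [Fintype W] [CommSemiring R] {f : W → V}

theorem extend_dotProduct (hf : Function.Injective f) (w : W → R) (g : V → R) :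
    Function.extend f w 0 ⬝ᵥ g = w ⬝ᵥ (g ∘ f) := by
  refine (Fintype.sum_of_injective f hf _ _ (fun x hx => ?_) fun i => ?_).symm
  · simp [Function.extend_apply' _ _ _ fun ⟨i, hi⟩ => hx ⟨i, hi⟩]
  · simp only [Function.comp_apply, hf.extend_apply]

theorem extend_dotProduct_extend (hf : Function.Injective f) (w u : W → R) :
    Function.extend f w 0 ⬝ᵥ Function.extend f u 0 = w ⬝ᵥ u := by
  rw [extend_dotProduct hf, Function.extend_comp hf]

theorem mulVec_extend_comp (A : Matrix V V R) (hf : Function.Injective f) (u : W → R) :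
    (A *ᵥ Function.extend f u 0) ∘ f = A.submatrix f f *ᵥ u := by
  ext i
  rw [Function.comp_apply, mulVec, dotProduct_comm, extend_dotProduct hf, dotProduct_comm]
  rfl

theorem extend_dotProduct_mulVec_extend (A : Matrix V V R) (hf : Function.Injective f)
    (w u : W → R) :
    Function.extend f w 0 ⬝ᵥ A *ᵥ Function.extend f u 0 = w ⬝ᵥ A.submatrix f f *ᵥ u := by
  rw [extend_dotProduct hf, mulVec_extend_comp A hf]

theorem matMinEig_le_matMinEig_submatrix [Nonempty W] {A : Matrix V V ℝ} (hA : A.IsHermitian)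
    (hf : Function.Injective f) : matMinEig A ≤ matMinEig (A.submatrix f f) := by
  obtain ⟨w, hw, hBw⟩ := (exists_mulVec_eq_smul_iff_mem_spectrum _ _).mpr
    (hA.submatrix f).matMinEig_mem_spectrum
  have hpos : 0 < w ⬝ᵥ w := by simpa using dotProduct_self_star_pos_iff.mpr hw
  have := hA.matMinEig_mul_dotProduct_self_le (Function.extend f w 0)
  rw [extend_dotProduct_extend hf, extend_dotProduct_mulVec_extend A hf, hBw, dotProduct_smul,
    smul_eq_mul] at this
  exact le_of_mul_le_mul_right this hpos

end Interlacing

section Graph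

variable {V W : Type*} [Fintype V] [Fintype W]

theorem adjMat_eq_adjMatrix (G : SimpleGraph V) : adjMat G = G.adjMatrix ℝ := rfl

theorem isHermitian_adjMat (G : SimpleGraph V) : (adjMat G).IsHermitian :=
  isHermitian_iff_isSymm.mpr (G.isSymm_adjMatrix (α := ℝ))

theorem minEig_mul_dotProduct_self_le (G : SimpleGraph V) (v : V → ℝ) :
    minEig G * (v ⬝ᵥ v) ≤ v ⬝ᵥ adjMat G *ᵥ v :=
  (isHermitian_adjMat G).matMinEig_mul_dotProduct_self_le v

theorem minEig_bot [Nonempty V] : minEig (⊥ : SimpleGraph V) = 0 := by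
  have : adjMat (⊥ : SimpleGraph V) = 0 := by ext; simp [adjMat]
  rw [minEig, this, matMinEig_zero]

theorem minEig_le_neg_one_of_adj {G : SimpleGraph V} {x y : V} (hxy : G.Adj x y) :
    minEig G ≤ -1 := by
  set v : V → ℝ := Pi.single x 1 - Pi.single y 1
  have hvv : v ⬝ᵥ v = 2 := by
    norm_num [v, sub_dotProduct, dotProduct_sub, hxy.ne, hxy.ne.symm]
  have hvAv : v ⬝ᵥ adjMat G *ᵥ v = -2 := by
    norm_num [v, sub_dotProduct, dotProduct_sub, mulVec_sub, adjMat, hxy, hxy.symm]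
  have := minEig_mul_dotProduct_self_le G v
  rw [hvv, hvAv] at this
  linarith

theorem minEig_le_minEig_of_embedding [Nonempty W] {G : SimpleGraph V} {H : SimpleGraph W}
    (f : H ↪g G) : minEig G ≤ minEig H := by
  have := matMinEig_le_matMinEig_submatrix (isHermitian_adjMat G) f.injective
  rwa [adjMat_eq_adjMatrix, f.submatrix_adjMatrix ℝ] at this

end Graph

theorem Fintype.sum_sum_ite_ne_mul {ι R : Type*} [Fintype ι] [DecidableEq ι] [CommRing R]
    (u : ι → R) :
    ∑ i, ∑ j, (if i ≠ j then u i * u j else 0) = (∑ i, u i) ^ 2 - ∑ i, u i ^ 2 := by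
  simp_rw [← Finset.sum_filter, Finset.filter_ne, Finset.sum_erase_eq_sub (Finset.mem_univ _),
    Finset.sum_sub_distrib, ← Finset.mul_sum, ← Finset.sum_mul, sq]

namespace Hgraph

variable {a t : ℕ}

theorem adj_castSucc_castSucc {i j : Fin (a + t)} :
    (Hgraph a t).Adj i.castSucc j.castSucc ↔ i ≠ j := by
  simp [Hgraph, Fin.ext_iff]

theorem adj_last_castSucc {j : Fin (a + t)} :
    (Hgraph a t).Adj (Fin.last _) j.castSucc ↔ (j : ℕ) < a := by
  rw [Hgraph, SimpleGraph.fromRel_adj, ← Fin.val_ne_iff, Fin.val_last, Fin.val_castSucc]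
  omega

theorem adj_castSucc_last {i : Fin (a + t)} :
    (Hgraph a t).Adj i.castSucc (Fin.last _) ↔ (i : ℕ) < a := by
  rw [SimpleGraph.adj_comm, adj_last_castSucc]

def blockVec (a t : ℕ) (α β γ : ℝ) : Fin (a + t + 1) → ℝ :=
  fun i => if (i : ℕ) < a then α else if (i : ℕ) < a + t then β else γ

theorem blockVec_dotProduct_self (α β γ : ℝ) :
    blockVec a t α β γ ⬝ᵥ blockVec a t α β γ = a * α ^ 2 + t * β ^ 2 + γ ^ 2 := by
  simp [dotProduct, Fin.sum_univ_castSucc, Fin.sum_univ_add, blockVec, sq]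

theorem blockVec_dotProduct_adjMat_mulVec (α β γ : ℝ) :
    blockVec a t α β γ ⬝ᵥ adjMat (Hgraph a t) *ᵥ blockVec a t α β γ =
      (a * α + t * β) ^ 2 - (a * α ^ 2 + t * β ^ 2) + 2 * a * α * γ := by
  rw [adjMat_eq_adjMatrix, SimpleGraph.dotProduct_mulVec_adjMatrix]
  simp only [Fin.sum_univ_castSucc, adj_castSucc_castSucc, adj_castSucc_last, adj_last_castSucc,
    SimpleGraph.irrefl, if_false, add_zero]
  simp only [Finset.sum_add_distrib,
    Fintype.sum_sum_ite_ne_mul fun i : Fin (a + t) => blockVec a t α β γ i.castSucc]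
  simp only [blockVec, Fin.val_castSucc, Fin.is_lt, ↓reduceIte, Fin.sum_univ_add, Fin.val_castAdd,
    Finset.sum_const, Finset.card_univ, Fintype.card_fin, nsmul_eq_mul, Fin.val_natAdd,
    add_lt_iff_neg_left, not_lt_zero, ite_pow, Fin.val_last, lt_self_iff_false, ite_mul,
    mul_ite]
  ring

end Hgraph

theorem mul_le_sq_of_forall_quadratic_nonneg {m : ℝ} (hm : 1 ≤ m) {a t : ℕ}
    (hq : ∀ α β γ : ℝ, -m * (a * α ^ 2 + t * β ^ 2 + γ ^ 2) ≤
      (a * α + t * β) ^ 2 - (a * α ^ 2 + t * β ^ 2) + 2 * a * α * γ) :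
    ((a : ℝ) - m * (m - 1)) * ((t : ℝ) - (m - 1) ^ 2) ≤ (m * (m - 1)) ^ 2 := by
  suffices hD : 0 ≤ a * (m - 1) ^ 2 + m * (m - 1) * t + m * (m - 1) ^ 2 - a * t by
    linear_combination hD
  -- `(α, β, γ)` is `1/t` times the first column of the adjugate of the ternary form in `hq`.
  have key : 0 ≤ a * m * (t + m - 1) *
      (a * (m - 1) ^ 2 + m * (m - 1) * t + m * (m - 1) ^ 2 - a * t) := by
    linear_combination hq (m * (t + m - 1)) (-(m * a)) (-(a * (t + m - 1)))
  obtain rfl | ha := Nat.eq_zero_or_pos a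
  · simp only [Nat.cast_zero]
    nlinarith
  obtain rfl | ht := Nat.eq_zero_or_pos t
  · simp only [Nat.cast_zero]
    nlinarith
  have ha' : (0 : ℝ) < a := by exact_mod_cast ha
  have ht' : (1 : ℝ) ≤ t := by exact_mod_cast ht
  exact nonneg_of_mul_nonneg_right key (mul_pos (mul_pos ha' (by linarith)) (by linarith))

theorem Hgraph.mul_le_sq_of_neg_le_minEig {m : ℝ} (hm : 1 ≤ m) {a t : ℕ}
    (hH : -m ≤ minEig (Hgraph a t)) :
    ((a : ℝ) - m * (m - 1)) * ((t : ℝ) - (m - 1) ^ 2) ≤ (m * (m - 1)) ^ 2 :=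
  mul_le_sq_of_forall_quadratic_nonneg hm fun α β γ => by
    have := minEig_mul_dotProduct_self_le (Hgraph a t) (Hgraph.blockVec a t α β γ)
    rw [Hgraph.blockVec_dotProduct_self, Hgraph.blockVec_dotProduct_adjMat_mulVec] at this
    exact (mul_le_mul_of_nonneg_right hH (by positivity)).trans this

/-- **Greaves–Koolen–Park.** If a graph with smallest eigenvalue `-m` (where `m > 0`)
contains `H(a,t)` as an induced subgraph, then
`(a - m(m-1))(t - (m-1)²) ≤ (m(m-1))²`. -/
theorem stmt19 (m : ℝ) (hm : 0 < m) (a t : ℕ) {n : ℕ} (G : SimpleGraph (Fin n))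
    (hmin : minEig G = -m) (hsub : Nonempty (Hgraph a t ↪g G)) :
    ((a : ℝ) - m * (m - 1)) * ((t : ℝ) - (m - 1) ^ 2) ≤ (m * (m - 1)) ^ 2 := by
  obtain ⟨f⟩ := hsub
  have : Nonempty (Fin n) := ⟨f 0⟩
  have hm1 : 1 ≤ m := by
    obtain ⟨x, y, hxy⟩ : ∃ x y, G.Adj x y := by
      by_contra! h
      have hG : G = ⊥ := by ext x y; simp [h x y]
      rw [hG, minEig_bot] at hmin
      linarith
    linarith [minEig_le_neg_one_of_adj hxy]
  exact Hgraph.mul_le_sq_of_neg_le_minEig hm1 (hmin ▸ minEig_le_minEig_of_embedding f)
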